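/- arXiv:2407.03638 — 3 statements merged into one kernel-verified Lean document; each statement's English description precedes it below -/
import Mathlib

section
/- Let Σ be a finite alphabet and for each a ∈ Σ let Δ_a be a derivation of the polynomial ring ℚ[X_1,…,X_k] (the derivations need not commute). Fix α ∈ ℚ[X_1,…,X_k] and define the ideal I_n generated by all Δ_w α for words w of length at most n, where Δ_w is the composition of the Δ_a's along w. Then the chain I_0 ⊆ I_1 ⊆ ⋯ is convex: for all n ≥ 1, the colon ideal I_{n−1} : I_n is contained in I_n : I_{n+1}. -/
/-- Iterated application of the derivations along a word: `Δ_ε α = α`,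
`Δ_{a·w} α = Δ_w (Δ_a α)`. -/
noncomputable def deltaWord {d k : ℕ}
    (Δ : Fin d → Derivation ℚ (MvPolynomial (Fin k) ℚ) (MvPolynomial (Fin k) ℚ)) :
    List (Fin d) → MvPolynomial (Fin k) ℚ → MvPolynomial (Fin k) ℚ
  | [], α => α
  | a :: w, α => deltaWord Δ w (Δ a α)

/-- The ideal `I_n` generated by all `Δ_w α` for words `w` of length at most `n`. -/
noncomputable def idealChain {d k : ℕ}
    (Δ : Fin d → Derivation ℚ (MvPolynomial (Fin k) ℚ) (MvPolynomial (Fin k) ℚ))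
    (α : MvPolynomial (Fin k) ℚ) (n : ℕ) : Ideal (MvPolynomial (Fin k) ℚ) :=
  Ideal.span { p | ∃ w : List (Fin d), w.length ≤ n ∧ p = deltaWord Δ w α }

/-!
By the Leibniz rule each `Δ_a` maps `I_m` into `I_{m+1}`. Now let `f I_n ⊆ I_{n-1}`. Apart from `α`,
the generators of `I_{n+1}` are `Δ_a x` with `x = Δ_w α ∈ I_n`, and
`f · Δ_a x = Δ_a (f x) - x · Δ_a f` lies in `I_n`: the first term because `f x ∈ I_{n-1}`,
the second because `x ∈ I_n`.
-/

theorem Ideal.mul_mem_of_forall_mem_span {R : Type*} [CommSemiring R] {s : Set R} {J : Ideal R}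
    {f : R} (hs : ∀ x ∈ s, f * x ∈ J) {h : R} (hh : h ∈ Ideal.span s) : f * h ∈ J := by
  have : Ideal.span s ≤ J.colon {f} := Ideal.span_le.mpr fun x hx => by
    simpa [Submodule.mem_colon_singleton, mul_comm] using hs x hx
  simpa [Submodule.mem_colon_singleton, mul_comm] using this hh

theorem Derivation.apply_mem_of_mem_span {A R : Type*} [CommSemiring A] [CommRing R] [Algebra A R]
    (D : Derivation A R R) {s : Set R} {J : Ideal R} (hsJ : Ideal.span s ≤ J)
    (hs : ∀ x ∈ s, D x ∈ J) {x : R} (hx : x ∈ Ideal.span s) : D x ∈ J := by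
  induction hx using Submodule.span_induction with
  | mem y hy => exact hs y hy
  | zero => simp
  | add y z _ _ hy hz => simpa using add_mem hy hz
  | smul r y hy hDy =>
    rw [smul_eq_mul, Derivation.leibniz, smul_eq_mul, smul_eq_mul]
    exact add_mem (J.mul_mem_left r hDy) (J.mul_mem_right _ (hsJ hy))

theorem Derivation.mul_apply_mem_of_mul_mem {A R : Type*} [CommSemiring A] [CommRing R] [Algebra A R]
    (D : Derivation A R R) {I J : Ideal R} (hDI : ∀ y ∈ I, D y ∈ J) {f x : R}
    (hfx : f * x ∈ I) (hx : x ∈ J) : f * D x ∈ J := by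
  have hleibniz : f * D x = D (f * x) - x * D f := by
    rw [Derivation.leibniz, smul_eq_mul, smul_eq_mul]; ring
  rw [hleibniz]
  exact sub_mem (hDI _ hfx) (J.mul_mem_right _ hx)

section IdealChain

variable {d k : ℕ} (Δ : Fin d → Derivation ℚ (MvPolynomial (Fin k) ℚ) (MvPolynomial (Fin k) ℚ))
  (α : MvPolynomial (Fin k) ℚ)

theorem deltaWord_append_singleton (w : List (Fin d)) (a : Fin d) :
    deltaWord Δ (w ++ [a]) α = Δ a (deltaWord Δ w α) := by
  induction w generalizing α with
  | nil => rfl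
  | cons b w ih => exact ih (Δ b α)

theorem deltaWord_mem_idealChain {n : ℕ} {w : List (Fin d)} (hw : w.length ≤ n) :
    deltaWord Δ w α ∈ idealChain Δ α n :=
  Ideal.subset_span ⟨w, hw, rfl⟩

theorem idealChain_mono : Monotone (idealChain Δ α) :=
  fun _ _ hmn => Ideal.span_mono fun _ ⟨w, hw, hp⟩ => ⟨w, hw.trans hmn, hp⟩

theorem derivation_mem_idealChain_succ (a : Fin d) {n : ℕ} {x : MvPolynomial (Fin k) ℚ}
    (hx : x ∈ idealChain Δ α n) : Δ a x ∈ idealChain Δ α (n + 1) := by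
  refine (Δ a).apply_mem_of_mem_span (idealChain_mono Δ α n.le_succ) ?_ hx
  rintro _ ⟨w, hw, rfl⟩
  rw [← deltaWord_append_singleton]
  exact deltaWord_mem_idealChain Δ α (by simpa using hw)

end IdealChain

/-- Convexity of the ideal chain: for all `n ≥ 1`, the colon ideal `I_{n−1} : I_n`
is contained in `I_n : I_{n+1}`. -/
theorem idealChain_convex {d k : ℕ}
    (Δ : Fin d → Derivation ℚ (MvPolynomial (Fin k) ℚ) (MvPolynomial (Fin k) ℚ))
    (α : MvPolynomial (Fin k) ℚ) (n : ℕ) (hn : 1 ≤ n)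
    (f : MvPolynomial (Fin k) ℚ)
    (hf : ∀ g ∈ idealChain Δ α n, f * g ∈ idealChain Δ α (n - 1)) :
    ∀ h ∈ idealChain Δ α (n + 1), f * h ∈ idealChain Δ α n := by
  have hΔ : ∀ a, ∀ y ∈ idealChain Δ α (n - 1), Δ a y ∈ idealChain Δ α n := fun a y hy => by
    simpa [Nat.sub_add_cancel hn] using derivation_mem_idealChain_succ Δ α a hy
  intro h hh
  refine Ideal.mul_mem_of_forall_mem_span ?_ hh
  rintro _ ⟨w, hw, rfl⟩
  rcases w.eq_nil_or_concat' with rfl | ⟨w, a, rfl⟩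
  · have hαn : α ∈ idealChain Δ α n := deltaWord_mem_idealChain Δ α (w := []) n.zero_le
    exact idealChain_mono Δ α (n.sub_le 1) (hf α hαn)
  · have hw : w.length ≤ n := by simpa using hw
    have hx := deltaWord_mem_idealChain Δ α hw
    rw [deltaWord_append_singleton]
    exact (Δ a).mul_apply_mem_of_mul_mem (hΔ a) (hf _ hx) hx
end

section
/- The map sending a commutative series f : Σ* → ℚ (with Σ of size d) to the power series Φ(f) := Σ_{n ∈ ℕ^d} f_{w_n} · x^n/n! (where w_n is any word with Parikh image n) is a ring homomorphism from the shuffle ring of commutative series to ℚ[[x_1,…,x_d]]: Φ(f + g) = Φ(f) + Φ(g) and Φ(f ⧢ g) = Φ(f) · Φ(g). -/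
/-- The subword of `w` at the positions in `s`, taken in increasing order. -/
def select {α : Type*} (w : List α) (s : Finset (Fin w.length)) : List α :=
  ((List.finRange w.length).filter (fun i => i ∈ s)).map w.get

/-- The shuffle product of series: `(f ⧢ g)_w = Σ_{w ∈ u ⧢ v} f_u · g_v`. -/
noncomputable def shuffleMul {α : Type*} (f g : List α → ℚ) : List α → ℚ :=
  fun w => ∑ s : Finset (Fin w.length), f (select w s) * g (select w sᶜ)

/-- The Parikh image of a word. -/
def parikh {d : ℕ} (w : List (Fin d)) : Fin d → ℕ := fun j => w.count j

/-- A canonical word with Parikh image `n`. -/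
def wordOf {d : ℕ} (n : Fin d →₀ ℕ) : List (Fin d) :=
  (List.finRange d).flatMap fun j => List.replicate (n j) j

/-- The transfer map from commutative series to power series:
`Φ(f) = Σ_{n ∈ ℕ^d} f_{w_n} · x^n/n!` where `w_n` is any word with Parikh image `n`. -/
noncomputable def seriesToPS {d : ℕ} (f : List (Fin d) → ℚ) : MvPowerSeries (Fin d) ℚ :=
  fun n => f (wordOf n) / (n.prod fun _ e => (e.factorial : ℚ))

/-!
Additivity holds coefficientwise. For the product, fix `n` and the word `w = wordOf n`: a set
`s` of positions of `w` splits it into the subwords at `s` and at `sᶜ`, whose Parikh images `k`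
and `n - k` alone determine the summand `f_u g_v` because `f` and `g` are commutative. Exactly
`∏ₐ C(nₐ, kₐ)` sets `s` produce the image `k`, and `C(n, k) / n! = 1 / (k! (n - k)!)` turns the
grouped shuffle sum divided by `n!` into the Cauchy product of the coefficients of `Φ f` and `Φ g`.
-/

open Finset Nat

section Select

variable {α : Type*}

theorem select_univ (w : List α) : select w univ = w := by
  simp [select, List.map_get_finRange]

theorem coe_select (w : List α) (s : Finset (Fin w.length)) :
    (select w s : Multiset α) = s.val.map w.get := by
  rw [select, ← Multiset.map_coe, ← Multiset.filter_coe]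
  congr
  -- `univ : Finset (Fin n)` is implemented by `List.finRange n`
  have : ((List.finRange w.length : List _) : Multiset _) = (univ : Finset (Fin w.length)).val :=
    rfl
  rw [this]
  exact congrArg Finset.val (filter_univ_mem s)

end Select

section ParikhFinsupp

variable {α : Type*} [DecidableEq α]

noncomputable def parikhFinsupp (w : List α) : α →₀ ℕ :=
  Multiset.toFinsupp w

theorem parikhFinsupp_apply (w : List α) (a : α) : parikhFinsupp w a = w.count a := by
  rw [parikhFinsupp, Multiset.toFinsupp_apply, Multiset.coe_count]

theorem parikhFinsupp_select_apply (w : List α) (s : Finset (Fin w.length)) (a : α) :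
    parikhFinsupp (select w s) a = #{i ∈ s | w.get i = a} := by
  rw [parikhFinsupp, Multiset.toFinsupp_apply, coe_select, Multiset.count_map, card_def,
    filter_val]
  simp only [eq_comm]

theorem parikhFinsupp_apply_eq_card (w : List α) (a : α) :
    parikhFinsupp w a = #{i | w.get i = a} := by
  conv_lhs => rw [← select_univ w]
  exact parikhFinsupp_select_apply w univ a

theorem parikhFinsupp_select_add_select_compl (w : List α) (s : Finset (Fin w.length)) :
    parikhFinsupp (select w s) + parikhFinsupp (select w sᶜ) = parikhFinsupp w := by
  conv_rhs => rw [← select_univ w]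
  simp only [parikhFinsupp, ← map_add, coe_select, ← Multiset.map_add]
  rw [← disjUnion_eq_union s sᶜ disjoint_compl_right |>.trans (union_compl s)]
  rfl

/-- A set of positions is determined by its traces on the positions of each letter, and these
traces can be chosen independently. -/
theorem card_filter_parikhFinsupp_select_eq [Fintype α] (w : List α) (k : α →₀ ℕ) :
    #{s : Finset (Fin w.length) | parikhFinsupp (select w s) = k}
      = ∏ a, (parikhFinsupp w a).choose (k a) := by
  set positions : α → Finset (Fin w.length) := fun a => {i | w.get i = a}
  set traces := Fintype.piFinset fun a => (positions a).powersetCard (k a)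
  have subset_positions : ∀ F ∈ traces, ∀ a, ∀ i ∈ F a, w.get i = a := fun F hF a i hi =>
    (mem_filter.1 ((mem_powersetCard.1 (Fintype.mem_piFinset.1 hF a)).1 hi)).2
  have trace_glue : ∀ F ∈ traces, ∀ a,
      {i ∈ ({i | i ∈ F (w.get i)} : Finset (Fin w.length)) | w.get i = a} = F a := by
    intro F hF a
    ext i
    simp only [mem_filter, mem_univ, true_and]
    exact ⟨fun ⟨hi, ha⟩ => ha ▸ hi,
      fun hi => ⟨(subset_positions F hF a i hi).symm ▸ hi, subset_positions F hF a i hi⟩⟩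
  simp only [parikhFinsupp_apply_eq_card, ← card_powersetCard, ← Fintype.card_piFinset]
  refine card_nbij' (fun s a => {i ∈ s | w.get i = a})
    (fun F => ({i | i ∈ F (w.get i)} : Finset _)) ?_ ?_ ?_ ?_
  · intro s hs
    simp only [coe_filter, mem_univ, true_and, Finsupp.ext_iff,
      parikhFinsupp_select_apply] at hs
    refine Fintype.mem_piFinset.2 fun a => mem_powersetCard.2 ⟨?_, hs a⟩
    exact fun i hi => by simpa [positions] using (mem_filter.1 hi).2
  · intro F hF
    simp only [coe_filter, mem_univ, true_and, Finsupp.ext_iff, parikhFinsupp_select_apply]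
    intro a
    rw [trace_glue F hF a]
    exact (mem_powersetCard.1 (Fintype.mem_piFinset.1 hF a)).2
  · intro s _
    ext i
    simp
  · intro F hF
    funext a
    exact trace_glue F hF a

end ParikhFinsupp

theorem shuffleMul_apply_of_eq_comp_parikhFinsupp {α : Type*} [DecidableEq α] [Fintype α]
    {f g : List α → ℚ} {F G : (α →₀ ℕ) → ℚ} (hf : ∀ u, f u = F (parikhFinsupp u))
    (hg : ∀ u, g u = G (parikhFinsupp u)) (w : List α) :
    shuffleMul f g w = ∑ p ∈ antidiagonal (parikhFinsupp w),
      (∏ a, (parikhFinsupp w a).choose (p.1 a) : ℚ) * (F p.1 * G p.2) := by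
  set split := fun s : Finset (Fin w.length) =>
    (parikhFinsupp (select w s), parikhFinsupp (select w sᶜ))
  have split_mem : ∀ s ∈ univ, split s ∈ antidiagonal (parikhFinsupp w) := fun s _ =>
    mem_antidiagonal.2 (parikhFinsupp_select_add_select_compl w s)
  simp only [shuffleMul, hf, hg]
  -- group the sets `s` by `split s`, which is already determined by its first component
  rw [← sum_fiberwise_of_maps_to split_mem]
  refine sum_congr rfl fun p hp => ?_
  have split_eq_iff : ∀ s, split s = p ↔ parikhFinsupp (select w s) = p.1 := fun s => by
    refine ⟨congrArg Prod.fst, fun h => Prod.ext h (add_left_cancel (a := p.1) ?_)⟩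
    rw [mem_antidiagonal.1 hp, ← parikhFinsupp_select_add_select_compl w s, h]
  rw [filter_congr fun s _ => split_eq_iff s, sum_congr rfl fun s hs => ?_, sum_const,
    card_filter_parikhFinsupp_select_eq, nsmul_eq_mul, cast_prod]
  exact congrArg (fun q => F q.1 * G q.2) ((split_eq_iff s).2 (mem_filter.1 hs).2)

theorem prod_choose_mul_prod_factorial_mul_prod_factorial {α R : Type*} [Fintype α]
    [CommSemiring R] (m n : α → ℕ) :
    (∏ a, ((m a + n a).choose (m a) : R)) * (∏ a, ((m a)! : R)) * ∏ a, ((n a)! : R)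
      = ∏ a, ((m a + n a)! : R) := by
  simp only [← prod_mul_distrib]
  exact prod_congr rfl fun a _ => by
    rw [choose_symm_add, ← cast_mul, ← cast_mul, add_choose_mul_factorial_mul_factorial]

section Parikh

variable {d : ℕ}

def IsCommutativeSeries (f : List (Fin d) → ℚ) : Prop :=
  ∀ u v : List (Fin d), parikh u = parikh v → f u = f v

theorem coe_parikhFinsupp (w : List (Fin d)) : ⇑(parikhFinsupp w) = parikh w :=
  funext (parikhFinsupp_apply w)

theorem parikhFinsupp_wordOf (n : Fin d →₀ ℕ) : parikhFinsupp (wordOf n) = n := by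
  ext j
  simp only [parikhFinsupp_apply, wordOf, List.count_flatMap, ← Fin.sum_univ_def,
    Function.comp_apply, List.count_replicate, beq_iff_eq, sum_ite_eq', mem_univ, if_true]

theorem IsCommutativeSeries.apply_eq {f : List (Fin d) → ℚ} (hf : IsCommutativeSeries f)
    (u : List (Fin d)) : f u = f (wordOf (parikhFinsupp u)) :=
  hf _ _ (by rw [← coe_parikhFinsupp, ← coe_parikhFinsupp, parikhFinsupp_wordOf])

theorem coeff_seriesToPS (f : List (Fin d) → ℚ) (n : Fin d →₀ ℕ) :
    MvPowerSeries.coeff n (seriesToPS f) = f (wordOf n) / ∏ j, ((n j)! : ℚ) := by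
  rw [← Finsupp.prod_fintype n (fun _ e => (e ! : ℚ)) fun _ => by simp]
  rfl

end Parikh

/-- `Φ` is a ring homomorphism from the shuffle ring of commutative series to
`ℚ[[x_1,…,x_d]]`: it sends pointwise sum to sum and shuffle product to Cauchy product. -/
theorem seriesToPS_hom {d : ℕ} (f g : List (Fin d) → ℚ)
    (hf : ∀ u v : List (Fin d), parikh u = parikh v → f u = f v)
    (hg : ∀ u v : List (Fin d), parikh u = parikh v → g u = g v) :
    seriesToPS (fun w => f w + g w) = seriesToPS f + seriesToPS g
      ∧ seriesToPS (shuffleMul f g) = seriesToPS f * seriesToPS g := by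
  refine ⟨MvPowerSeries.ext fun n => add_div _ _ _, MvPowerSeries.ext fun n => ?_⟩
  rw [coeff_seriesToPS, MvPowerSeries.coeff_mul,
    shuffleMul_apply_of_eq_comp_parikhFinsupp (F := fun n => f (wordOf n))
      (G := fun n => g (wordOf n)) (IsCommutativeSeries.apply_eq hf)
      (IsCommutativeSeries.apply_eq hg),
    parikhFinsupp_wordOf, sum_div]
  refine sum_congr rfl fun p hp => ?_
  obtain rfl := mem_antidiagonal.1 hp
  have choose_ne_zero : ∏ a, ((p.1 a + p.2 a).choose (p.1 a) : ℚ) ≠ 0 :=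
    prod_ne_zero_iff.2 fun a _ => cast_ne_zero.2 (choose_pos (le_add_right _ _)).ne'
  simp only [coeff_seriesToPS, Finsupp.add_apply,
    ← prod_choose_mul_prod_factorial_mul_prod_factorial (R := ℚ) p.1 p.2]
  field_simp
end

section
/- Let f ∈ ℚ[[x_1,…,x_d]]^k be a tuple of power series with f(0) = 0 satisfying the polynomial differential system ∂_{x_j} f^{(i)} = P_{ij}(f) for polynomials P_{ij} = q^{-1} Q_{ij} with Q_{ij} ∈ ℤ[y_1,…,y_k] and q a positive integer. Then for every multi-index n ∈ ℕ^d, the coefficient vector q^{|n|} · [x^n] f lies in ℤ^k, where |n| = n_1 + ⋯ + n_d and [x^n] f is the exponential coefficient (so f = Σ_n ([x^n]f) x^n/n!). -/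
/-!
Call a power series `q`-integral up to order `N` if `q ^ |n| · [x^n] g ∈ ℤ` whenever
`|n| ≤ N`. These series form a subring, because exponential coefficients of a product are
binomial convolutions of those of the factors; so `Q_{ij}(f)` is `q`-integral up to `N` once
`f` is. Since `[x^n] (q ∂_j f) = q · [x^{n + e_j}] f`, the system `q ∂_j f = Q_{ij}(f)` then
raises the order of `q`-integrality of `f` to `N + 1`, and induction on `N` concludes.
-/

/-- Formal partial derivative `∂_{x_j}` of a multivariate power series. -/
noncomputable def pderiv {σ : Type*} [DecidableEq σ] (j : σ)
    (f : MvPowerSeries σ ℚ) : MvPowerSeries σ ℚ :=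
  fun n => ((n j : ℚ) + 1) * MvPowerSeries.coeff (n + Finsupp.single j 1) f

/-- Exponential coefficient extraction: `[x^n] f = f_n` where `f = Σ f_n · x^n/n!`. -/
noncomputable def ecoeff {d : ℕ} (n : Fin d →₀ ℕ) (f : MvPowerSeries (Fin d) ℚ) : ℚ :=
  (n.prod fun _ e => (e.factorial : ℚ)) * MvPowerSeries.coeff n f

open MvPowerSeries (coeff coeff_mul coeff_C_mul C constantCoeff)
open MvPolynomial (aeval aeval_range)
open Finsupp (single)
open Finset.HasAntidiagonal (antidiagonal mem_antidiagonal)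

section ExponentialCoefficients

variable {d : ℕ}

lemma ecoeff_eq_prod_factorial_mul (n : Fin d →₀ ℕ) (g : MvPowerSeries (Fin d) ℚ) :
    ecoeff n g = (∏ t, ((n t).factorial : ℚ)) * coeff n g := by
  rw [ecoeff, Finsupp.prod_fintype _ _ fun _ => by simp]

lemma ecoeff_add (n : Fin d →₀ ℕ) (g h : MvPowerSeries (Fin d) ℚ) :
    ecoeff n (g + h) = ecoeff n g + ecoeff n h := by
  simp only [ecoeff, map_add, mul_add]

lemma ecoeff_natCast_mul (n : Fin d →₀ ℕ) (q : ℕ) (g : MvPowerSeries (Fin d) ℚ) :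
    ecoeff n ((q : MvPowerSeries (Fin d) ℚ) * g) = q * ecoeff n g := by
  rw [ecoeff, ecoeff, ← map_natCast (C (σ := Fin d) (R := ℚ)), coeff_C_mul]
  ring

lemma ecoeff_mul (n : Fin d →₀ ℕ) (g h : MvPowerSeries (Fin d) ℚ) :
    ecoeff n (g * h) = ∑ p ∈ antidiagonal n,
      (∏ t, ((n t).choose (p.1 t) : ℚ)) * (ecoeff p.1 g * ecoeff p.2 h) := by
  rw [ecoeff_eq_prod_factorial_mul, coeff_mul, Finset.mul_sum]
  refine Finset.sum_congr rfl fun ⟨u, v⟩ huv => ?_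
  obtain rfl : u + v = n := mem_antidiagonal.mp huv
  simp only [ecoeff_eq_prod_factorial_mul, Finsupp.add_apply]
  have hfact : ∀ t, ((u t + v t).factorial : ℚ)
      = (u t + v t).choose (u t) * ((u t).factorial * (v t).factorial) := fun t => by
    rw [← Nat.add_choose_mul_factorial_mul_factorial (u t) (v t), Nat.choose_symm_add]
    push_cast; ring
  simp only [hfact, Finset.prod_mul_distrib]
  ring

lemma ecoeff_pderiv (n : Fin d →₀ ℕ) (j : Fin d) (g : MvPowerSeries (Fin d) ℚ) :
    ecoeff n (pderiv j g) = ecoeff (n + single j 1) g := by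
  have hfact : ∀ t, (((n + single j 1 : Fin d →₀ ℕ) t).factorial : ℚ)
      = (n t).factorial * if t = j then (n j : ℚ) + 1 else 1 := fun t => by
    by_cases ht : t = j
    · subst ht; simp [Nat.factorial_succ]; ring
    · simp [ht]
  rw [ecoeff_eq_prod_factorial_mul, ecoeff_eq_prod_factorial_mul,
    Finset.prod_congr rfl fun t _ => hfact t, Finset.prod_mul_distrib, Finset.prod_ite_eq',
    if_pos (Finset.mem_univ j), mul_assoc]
  rfl

end ExponentialCoefficients

lemma MvPolynomial.aeval_mem_of_forall_mem {σ A : Type*} [CommRing A] [Algebra ℤ A]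
    {S : Subring A} {f : σ → A} (hf : ∀ i, f i ∈ S) (P : MvPolynomial σ ℤ) :
    aeval f P ∈ S := by
  obtain rfl : ‹Algebra ℤ A› = Ring.toIntAlgebra A := Subsingleton.elim _ _
  have hle : Algebra.adjoin ℤ (Set.range f) ≤ subalgebraOfSubring S :=
    Algebra.adjoin_le (Set.range_subset_iff.mpr fun i => mem_subalgebraOfSubring.mpr (hf i))
  exact mem_subalgebraOfSubring.mp (hle (aeval_range (R := ℤ) f ▸ ⟨P, rfl⟩))

section ScaledIntegrality

variable {d : ℕ} (q : ℕ)

def qIntegralUpTo (N : ℕ) : Subring (MvPowerSeries (Fin d) ℚ) where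
  carrier := {g | ∀ n : Fin d →₀ ℕ, n.degree ≤ N →
    (q : ℚ) ^ n.degree * ecoeff n g ∈ (Int.castRingHom ℚ).range}
  zero_mem' n _ := by simp [ecoeff]
  one_mem' n _ := by
    rw [ecoeff, MvPowerSeries.coeff_one]
    split_ifs with hn <;> simp [hn]
  add_mem' {g h} hg hh n hn := by
    rw [ecoeff_add, mul_add]
    exact add_mem (hg n hn) (hh n hn)
  neg_mem' {g} hg n hn := by
    simpa [ecoeff] using neg_mem (hg n hn)
  mul_mem' {g h} hg hh n hn := by
    rw [ecoeff_mul, Finset.mul_sum]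
    refine sum_mem fun p hp => ?_
    obtain rfl := mem_antidiagonal.mp hp
    rw [map_add] at hn ⊢
    have hchoose :
        (∏ t, (((p.1 + p.2) t).choose (p.1 t) : ℚ)) ∈ (Int.castRingHom ℚ).range :=
      prod_mem fun t _ => natCast_mem _ _
    convert mul_mem hchoose (mul_mem (hg p.1 (by omega)) (hh p.2 (by omega))) using 1
    ring

variable {q}

lemma mem_qIntegralUpTo_zero {g : MvPowerSeries (Fin d) ℚ} (hg : constantCoeff g = 0) :
    g ∈ qIntegralUpTo q 0 := by
  intro n hn
  obtain rfl := (Finsupp.degree_eq_zero_iff n).mp (by omega)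
  simp [ecoeff, hg]

lemma mem_qIntegralUpTo_succ {N : ℕ} {g : MvPowerSeries (Fin d) ℚ} (hg : constantCoeff g = 0)
    (hd : ∀ j, (q : MvPowerSeries (Fin d) ℚ) * pderiv j g ∈ qIntegralUpTo q N) :
    g ∈ qIntegralUpTo q (N + 1) := by
  intro n hn
  rcases eq_or_ne n 0 with rfl | hn0
  · simp [ecoeff, hg]
  obtain ⟨j, hj⟩ : ∃ j, n j ≠ 0 := by simpa [Finsupp.ext_iff] using hn0
  obtain ⟨m, rfl⟩ : ∃ m, n = m + single j 1 :=
    ⟨n - single j 1, (tsub_add_cancel_of_le (Finsupp.single_le_iff.mpr (by omega))).symm⟩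
  rw [map_add, Finsupp.degree_single] at hn ⊢
  have hm := hd j m (by omega)
  rw [ecoeff_natCast_mul, ecoeff_pderiv] at hm
  convert hm using 1
  ring

end ScaledIntegrality

theorem cdf_denominator_bound_general {d k : ℕ} (f : Fin k → MvPowerSeries (Fin d) ℚ)
    (hf0 : ∀ i : Fin k, MvPowerSeries.constantCoeff (f i) = 0)
    (Q : Fin k → Fin d → MvPolynomial (Fin k) ℤ) (q : ℕ)
    (hsys : ∀ (i : Fin k) (j : Fin d),
      (q : MvPowerSeries (Fin d) ℚ) * pderiv j (f i) = MvPolynomial.aeval f (Q i j)) :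
    ∀ (n : Fin d →₀ ℕ) (i : Fin k), ∃ z : ℤ,
      (q : ℚ) ^ (n.sum fun _ e => e) * ecoeff n (f i) = (z : ℚ) := by
  have hmem : ∀ N i, f i ∈ qIntegralUpTo q N := by
    intro N
    induction N with
    | zero => exact fun i => mem_qIntegralUpTo_zero (hf0 i)
    | succ N ih =>
      exact fun i => mem_qIntegralUpTo_succ (hf0 i) fun j =>
        hsys i j ▸ MvPolynomial.aeval_mem_of_forall_mem ih (Q i j)
  intro n i
  obtain ⟨z, hz⟩ := hmem n.degree i n le_rfl
  exact ⟨z, hz.symm⟩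

/-- Let `f ∈ ℚ[[x_1,…,x_d]]^k` with `f(0) = 0` satisfy the polynomial differential
system `∂_{x_j} f^{(i)} = q⁻¹ · Q_{ij}(f)` with `Q_{ij} ∈ ℤ[y_1,…,y_k]` and `q` a
positive integer.  Then `q^{|n|} · [x^n] f ∈ ℤ^k` for every multi-index `n`. -/
theorem cdf_denominator_bound {d k : ℕ} (f : Fin k → MvPowerSeries (Fin d) ℚ)
    (hf0 : ∀ i : Fin k, MvPowerSeries.constantCoeff (f i) = 0)
    (Q : Fin k → Fin d → MvPolynomial (Fin k) ℤ) (q : ℕ) (hq : 0 < q)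
    (hsys : ∀ (i : Fin k) (j : Fin d),
      (q : MvPowerSeries (Fin d) ℚ) * pderiv j (f i) = MvPolynomial.aeval f (Q i j)) :
    ∀ (n : Fin d →₀ ℕ) (i : Fin k), ∃ z : ℤ,
      (q : ℚ) ^ (n.sum fun _ e => e) * ecoeff n (f i) = (z : ℚ) :=
  cdf_denominator_bound_general f hf0 Q q hsys
end
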